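/- The dual filter space S_V of a de Vries algebra V is order-normal: for any closed set A and regular closed set B with A ⊆ ↓(complement of B), i.e., A disjoint from the upset-interior of B, there are disjoint open sets separating them in the order-normality sense. -/

import Mathlib

/-- A de Vries algebra structure on a complete Boolean algebra `B`:
a subordination relation `prec` satisfying axioms (A1)-(A7). -/
structure DeVries (B : Type*) [CompleteBooleanAlgebra B] where
  prec : B → B → Prop
  A1 : prec ⊤ ⊤
  A2 : ∀ {a b : B}, prec a b → a ≤ b
  A3 : ∀ {a b c d : B}, a ≤ b → prec b c → c ≤ d → prec a d
  A4 : ∀ {a b c : B}, prec a b → prec a c → prec a (b ⊓ c)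
  A5 : ∀ {a b : B}, prec a b → prec bᶜ aᶜ
  A6 : ∀ {a c : B}, prec a c → ∃ b, prec a b ∧ prec b c
  A7 : ∀ {a : B}, a ≠ ⊥ → ∃ b, b ≠ ⊥ ∧ prec b a

variable {B : Type*} [CompleteBooleanAlgebra B]

/-- A (proper) filter on `B`, as a set. -/
def IsProperFilter (F : Set B) : Prop :=
  ⊤ ∈ F ∧ ⊥ ∉ F ∧ (∀ a b : B, a ∈ F → a ≤ b → b ∈ F) ∧
    (∀ a b : B, a ∈ F → b ∈ F → a ⊓ b ∈ F)

/-- A concordant filter: a proper filter in which every element has a ≺-predecessor. -/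
def Concordant (V : DeVries B) (F : Set B) : Prop :=
  IsProperFilter F ∧ ∀ a ∈ F, ∃ b ∈ F, V.prec b a

/-- The dual filter space: the set of concordant filters. -/
def SV (V : DeVries B) : Type _ := {F : Set B // Concordant V F}

/-- Basic open set `â = {F : a ∈ F}`. -/
def hatt (V : DeVries B) (a : B) : Set (SV V) := {F : SV V | a ∈ F.1}

/-- The Stone-like topology on `SV V`, generated by the sets `â`. -/
instance instTopSV (V : DeVries B) : TopologicalSpace (SV V) :=
  TopologicalSpace.generateFrom {U : Set (SV V) | ∃ a : B, U = hatt V a}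

/-- Downward closure under the inclusion (specialization) order of filters. -/
def dclF (V : DeVries B) (A : Set (SV V)) : Set (SV V) :=
  {F : SV V | ∃ G ∈ A, F.1 ⊆ G.1}

/-- Interior in the upset topology of the inclusion order: all extensions lie in `A`. -/
def upIntF (V : DeVries B) (A : Set (SV V)) : Set (SV V) :=
  {F : SV V | ∀ G : SV V, F.1 ⊆ G.1 → G ∈ A}

/-! Every regular closed set of `S_V` is the complement of a basic open set `b̂`, and its
upset-interior is then the principal upset of the concordant filter `F₀` generated by the
complements of the elements way below `b`. If `F₀` avoids the closed set `A`, some basic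
neighbourhood `x̂ ∋ F₀` does too, with `cᶜ ≤ x` for some `c ≺ b`. Interpolating `c ≺ u ≺ b`,
every filter of `A` omits `cᶜ` and so extends to one containing `u`, while every filter above
`F₀` contains `uᶜ`, so `û` and `(uᶜ)^` separate `A` from the upset-interior. -/

namespace DeVries

variable (V : DeVries B)

theorem bot_prec (b : B) : V.prec ⊥ b :=
  V.A3 le_rfl (by simpa using V.A5 V.A1) bot_le

variable {V}

theorem sup_prec {a b c : B} (ha : V.prec a c) (hb : V.prec b c) : V.prec (a ⊔ b) c := by
  simpa using V.A5 (V.A4 (V.A5 ha) (V.A5 hb))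

end DeVries

namespace SV

variable {V : DeVries B}

theorem top_mem (F : SV V) : (⊤ : B) ∈ F.1 := F.2.1.1

theorem bot_not_mem (F : SV V) : (⊥ : B) ∉ F.1 := F.2.1.2.1

theorem mem_of_le (F : SV V) {a b : B} (ha : a ∈ F.1) (hab : a ≤ b) : b ∈ F.1 :=
  F.2.1.2.2.1 a b ha hab

theorem inf_mem (F : SV V) {a b : B} (ha : a ∈ F.1) (hb : b ∈ F.1) : a ⊓ b ∈ F.1 :=
  F.2.1.2.2.2 a b ha hb

theorem exists_mem_of_ne_bot {e : B} (he : e ≠ ⊥) : ∃ G : SV V, e ∈ G.1 := by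
  choose f hf_ne hf_prec using fun x : {x : B // x ≠ ⊥} => V.A7 x.2
  let g : ℕ → {x : B // x ≠ ⊥} := fun n => Nat.rec ⟨e, he⟩ (fun _ x => ⟨f x, hf_ne x⟩) n
  have hg : ∀ n, V.prec (g (n + 1)).1 (g n).1 := fun n => hf_prec (g n)
  have hanti : Antitone fun n => (g n).1 := antitone_nat_of_succ_le fun n => V.A2 (hg n)
  have hG : Concordant V {x : B | ∃ n, (g n).1 ≤ x} := by
    refine ⟨⟨⟨0, le_top⟩, ?_, ?_, ?_⟩, ?_⟩
    · rintro ⟨n, hn⟩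
      exact (g n).2 (le_bot_iff.mp hn)
    · rintro a b ⟨n, hn⟩ hab
      exact ⟨n, hn.trans hab⟩
    · rintro a b ⟨n, hn⟩ ⟨m, hm⟩
      exact ⟨max n m, le_inf ((hanti (le_max_left n m)).trans hn)
        ((hanti (le_max_right n m)).trans hm)⟩
    · rintro a ⟨n, hn⟩
      exact ⟨(g (n + 1)).1, ⟨n + 1, le_rfl⟩, V.A3 le_rfl (hg n) hn⟩
  exact ⟨⟨_, hG⟩, 0, le_rfl⟩

/-- The filter generated by `F` and `{d | c ≺ d}` is proper exactly because `cᶜ ∉ F`. -/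
theorem exists_le_mem_of_prec (F : SV V) {c u : B} (hcu : V.prec c u) (hc : cᶜ ∉ F.1) :
    ∃ G : SV V, F.1 ⊆ G.1 ∧ u ∈ G.1 := by
  set G : Set B := {x | ∃ a ∈ F.1, ∃ d, V.prec c d ∧ a ⊓ d ≤ x}
  have hFG : F.1 ⊆ G := fun a ha => ⟨a, ha, ⊤, V.A3 le_rfl hcu le_top, inf_le_left⟩
  have hG : Concordant V G := by
    refine ⟨⟨hFG F.top_mem, ?_, ?_, ?_⟩, ?_⟩
    · rintro ⟨a, ha, d, hcd, had⟩
      have hca : c ≤ aᶜ := V.A2 (V.A3 le_rfl hcd (disjoint_iff_inf_le.mpr had).symm.le_compl_right)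
      exact hc (F.mem_of_le ha (le_compl_comm.mp hca))
    · rintro x y ⟨a, ha, d, hcd, hx⟩ hxy
      exact ⟨a, ha, d, hcd, hx.trans hxy⟩
    · rintro x y ⟨a, ha, d, hcd, hx⟩ ⟨a', ha', d', hcd', hy⟩
      refine ⟨a ⊓ a', F.inf_mem ha ha', d ⊓ d', V.A4 hcd hcd', le_trans ?_ (inf_le_inf hx hy)⟩
      exact le_inf (inf_le_inf inf_le_left inf_le_left) (inf_le_inf inf_le_right inf_le_right)
    · rintro x ⟨a, ha, d, hcd, hx⟩
      obtain ⟨a', ha', ha'a⟩ := F.2.2 a ha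
      obtain ⟨d', hcd', hd'd⟩ := V.A6 hcd
      refine ⟨a' ⊓ d', ⟨a', ha', d', hcd', le_rfl⟩, V.A3 le_rfl (V.A4 ?_ ?_) hx⟩
      · exact V.A3 inf_le_left ha'a le_rfl
      · exact V.A3 inf_le_right hd'd le_rfl
  exact ⟨⟨G, hG⟩, hFG, ⊤, F.top_mem, u, hcu, inf_le_right⟩

end SV

section Topology

variable {V : DeVries B}

theorem hatt_top : hatt V ⊤ = Set.univ :=
  Set.eq_univ_of_forall SV.top_mem

theorem hatt_inf (a b : B) : hatt V (a ⊓ b) = hatt V a ∩ hatt V b :=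
  Set.ext fun F => ⟨fun h => ⟨F.mem_of_le h inf_le_left, F.mem_of_le h inf_le_right⟩,
    fun h => F.inf_mem h.1 h.2⟩

theorem disjoint_hatt_compl (a : B) : Disjoint (hatt V a) (hatt V aᶜ) :=
  Set.disjoint_left.mpr fun F ha hac => F.bot_not_mem (by simpa using F.inf_mem ha hac)

theorem isTopologicalBasis_hatt :
    TopologicalSpace.IsTopologicalBasis {U : Set (SV V) | ∃ a : B, U = hatt V a} := by
  refine TopologicalSpace.isTopologicalBasis_of_subbasis_of_finiteInter rfl ⟨⟨⊤, hatt_top.symm⟩, ?_⟩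
  rintro _ ⟨a, rfl⟩ _ ⟨b, rfl⟩
  exact ⟨a ⊓ b, (hatt_inf a b).symm⟩

theorem isOpen_hatt (a : B) : IsOpen (hatt V a) :=
  isTopologicalBasis_hatt.isOpen ⟨a, rfl⟩

theorem mem_closure_iff_hatt {S : Set (SV V)} {F : SV V} :
    F ∈ closure S ↔ ∀ x ∈ F.1, (hatt V x ∩ S).Nonempty := by
  simp [isTopologicalBasis_hatt.mem_closure_iff, hatt]

theorem exists_hatt_disjoint_of_isClosed {A : Set (SV V)} (hA : IsClosed A) {F : SV V}
    (hF : F ∉ A) : ∃ x ∈ F.1, Disjoint (hatt V x) A := by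
  obtain ⟨_, ⟨x, rfl⟩, hFx, hxA⟩ :=
    isTopologicalBasis_hatt.exists_subset_of_mem_open hF hA.isOpen_compl
  exact ⟨x, hFx, Set.subset_compl_iff_disjoint_right.mp hxA⟩

theorem closure_eq_compl_hatt {O : Set (SV V)} (hO : IsOpen O) :
    closure O = (hatt V (sSup {a : B | hatt V a ⊆ O})ᶜ)ᶜ := by
  set s := sSup {a : B | hatt V a ⊆ O}
  ext F
  rw [mem_closure_iff_hatt]
  constructor
  · rintro h hsF
    obtain ⟨G, hGs, hGO⟩ := h _ hsF
    obtain ⟨_, ⟨a, rfl⟩, haG, haO⟩ := isTopologicalBasis_hatt.exists_subset_of_mem_open hGO hO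
    have has : a ⊓ sᶜ ≤ ⊥ := calc
      a ⊓ sᶜ ≤ s ⊓ sᶜ := inf_le_inf_right sᶜ (le_sSup (show a ∈ {a : B | hatt V a ⊆ O} from haO))
      _ = ⊥ := inf_compl_eq_bot
    exact G.bot_not_mem (G.mem_of_le (G.inf_mem haG hGs) has)
  · intro hsF x hxF
    have hxs : x ⊓ s ≠ ⊥ := fun h => hsF (F.mem_of_le hxF (disjoint_iff.mpr h).le_compl_right)
    obtain ⟨a, haO, hxa⟩ : ∃ a ∈ {a : B | hatt V a ⊆ O}, x ⊓ a ≠ ⊥ := by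
      by_contra! h
      exact hxs (by simpa [s, inf_sSup_eq] using h)
    obtain ⟨G, hG⟩ := SV.exists_mem_of_ne_bot (V := V) hxa
    exact ⟨G, G.mem_of_le hG inf_le_left, haO (G.mem_of_le hG inf_le_right)⟩

/-- The least filter in the upset-interior of `(hatt V b)ᶜ`. -/
def precComplFilter (V : DeVries B) (b : B) : Set B :=
  {x | ∃ c, V.prec c b ∧ cᶜ ≤ x}

theorem concordant_precComplFilter {b : B} (hb : ¬ V.prec ⊤ b) :
    Concordant V (precComplFilter V b) := by
  refine ⟨⟨⟨⊥, V.bot_prec b, le_top⟩, ?_, ?_, ?_⟩, ?_⟩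
  · rintro ⟨c, hcb, hc⟩
    rw [le_bot_iff, compl_eq_bot] at hc
    exact hb (hc ▸ hcb)
  · rintro x y ⟨c, hcb, hc⟩ hxy
    exact ⟨c, hcb, hc.trans hxy⟩
  · rintro x y ⟨c, hcb, hx⟩ ⟨c', hc'b, hy⟩
    exact ⟨c ⊔ c', DeVries.sup_prec hcb hc'b, compl_sup (a := c) ▸ inf_le_inf hx hy⟩
  · rintro x ⟨c, hcb, hc⟩
    obtain ⟨d, hcd, hdb⟩ := V.A6 hcb
    exact ⟨dᶜ, ⟨d, hdb, le_rfl⟩, V.A3 le_rfl (V.A5 hcd) hc⟩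

theorem upIntF_compl_hatt (b : B) :
    upIntF V (hatt V b)ᶜ = {F : SV V | precComplFilter V b ⊆ F.1} := by
  ext F
  constructor
  · rintro hF x ⟨c, hcb, hcx⟩
    refine F.mem_of_le (not_not.mp fun hcF => ?_) hcx
    obtain ⟨G, hFG, hbG⟩ := F.exists_le_mem_of_prec hcb hcF
    exact hF G hFG hbG
  · intro hF G hFG hbG
    obtain ⟨c, hcG, hcb⟩ := G.2.2 b hbG
    exact G.bot_not_mem (by simpa using G.inf_mem hcG (hFG (hF ⟨c, hcb, le_rfl⟩)))

end Topology

theorem stmt14 (V : DeVries B) (A C : Set (SV V))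
    (hA : IsClosed A) (hC : closure (interior C) = C)
    (hdisj : Disjoint A (upIntF V C)) :
    ∃ U W : Set (SV V), IsOpen U ∧ IsOpen W ∧ Disjoint U W ∧
      A ⊆ dclF V U ∧ upIntF V C ⊆ W := by
  obtain ⟨b, rfl⟩ : ∃ b, C = (hatt V b)ᶜ :=
    ⟨_, hC.symm.trans (closure_eq_compl_hatt isOpen_interior)⟩
  rw [upIntF_compl_hatt] at hdisj ⊢
  by_cases htop : V.prec ⊤ b
  · refine ⟨Set.univ, ∅, isOpen_univ, isOpen_empty, Set.disjoint_empty _,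
      fun F _ => ⟨F, trivial, subset_rfl⟩, fun F hF => F.bot_not_mem ?_⟩
    exact hF ⟨⊤, htop, by simp⟩
  let F₀ : SV V := ⟨_, concordant_precComplFilter htop⟩
  have hF₀A : F₀ ∉ A := fun h => Set.disjoint_left.mp hdisj h Set.Subset.rfl
  obtain ⟨x, ⟨c, hcb, hcx⟩, hxA⟩ := exists_hatt_disjoint_of_isClosed hA hF₀A
  obtain ⟨u, hcu, hub⟩ := V.A6 hcb
  refine ⟨hatt V u, hatt V uᶜ, isOpen_hatt u, isOpen_hatt uᶜ, disjoint_hatt_compl u,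
    fun F hFA => ?_, fun F hF => hF ⟨u, hub, le_rfl⟩⟩
  have hcF : cᶜ ∉ F.1 := fun hcF => Set.disjoint_left.mp hxA (F.mem_of_le hcF hcx) hFA
  obtain ⟨G, hFG, huG⟩ := F.exists_le_mem_of_prec hcu hcF
  exact ⟨G, huG, hFG⟩
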